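/- Fix n ≥ 2 and define F : Sym_{n+1}(ℝ) → ℝ on symmetric (n+1)×(n+1) matrices M = (m_{kl}) by F(M) := −m_{nn} − m_{n+1,n+1} + Σ_{i=1}^{n-1} det[[m_{ii}, m_{in}, m_{i,n+1}], [m_{ni}, m_{nn}, m_{n,n+1}], [m_{n+1,i}, m_{n+1,n}, m_{n+1,n+1}]]. Let v₀ : ℝ^{n+1} → ℝ, v₀(y) := −(1/3)(y_n³ − 3 y_n y_{n+1}²), with Hessian D²v₀(y). Then: (a) F(D²v₀(y)) = 0 for every y ∈ ℝ^{n+1}; and (b) for every y ∈ ℝ^{n+1} and every symmetric matrix H, the directional derivative satisfies d/dt|_{t=0} F(D²v₀(y) + tH) = −( 4(y_n² + y_{n+1}²) Σ_{i=1}^{n-1} H_{ii} + H_{nn} + H_{n+1,n+1} ). In particular, the linearization of u ↦ F(D²u) at v₀ is (minus) the Baouendi–Grushin operator u ↦ 4(y_n² + y_{n+1}²) Σ_{i=1}^{n-1} ∂_{ii}u + ∂_{nn}u + ∂_{n+1,n+1}u. -/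

import Mathlib

open MeasureTheory Metric Set Filter Topology
open scoped BigOperators ENNReal NNReal

noncomputable section

/-- `ℝ^{n+1}` with the Euclidean structure. -/
abbrev Euc (n : ℕ) := EuclideanSpace ℝ (Fin (n + 1))

/-- The index of the coordinate `x_{n+1}`. -/
def idxLast (n : ℕ) : Fin (n + 1) := Fin.last n

/-- The index of the coordinate `x_n`. -/
def idxN (n : ℕ) : Fin (n + 1) := ⟨n - 1, by omega⟩

/-- The embedding of tangential indices `1, …, n-1`. -/
def idxT (n : ℕ) (i : Fin (n - 1)) : Fin (n + 1) := ⟨i.1, by have := i.2; omega⟩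

/-- The upper half ball `B_r^+(x₀)`. -/
def BplusAt (n : ℕ) (r : ℝ) (x₀ : Euc n) : Set (Euc n) :=
  Metric.ball x₀ r ∩ {x : Euc n | 0 < x (idxLast n)}

/-- The thin ball `B_r'(x₀)`. -/
def BprimeAt (n : ℕ) (r : ℝ) (x₀ : Euc n) : Set (Euc n) :=
  Metric.ball x₀ r ∩ {x : Euc n | x (idxLast n) = 0}

/-- The partial derivative `∂_i v(x)`. -/
def pd (n : ℕ) (v : Euc n → ℝ) (i : Fin (n + 1)) (x : Euc n) : ℝ :=
  fderiv ℝ v x (EuclideanSpace.single i 1)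

/-- The second partial derivative `∂_{ij} v = ∂_j ∂_i v`. -/
def pd2 (n : ℕ) (v : Euc n → ℝ) (i j : Fin (n + 1)) (x : Euc n) : ℝ :=
  pd n (pd n v i) j x

/-- Assembling a point of `ℝ^{n+1}` from a tangential part `u ∈ ℝ^{n-1}` and
the values `s`, `t` of the coordinates `x_n` and `x_{n+1}`. -/
def put (n : ℕ) (u : EuclideanSpace ℝ (Fin (n - 1))) (s t : ℝ) : Euc n :=
  (EuclideanSpace.equiv (Fin (n + 1)) ℝ).symm fun i =>
    if h : i.1 < n - 1 then u ⟨i.1, h⟩ else if i.1 = n - 1 then s else t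

/-- The tangential projection `x ↦ x''`. -/
def proj'' (n : ℕ) (x : Euc n) : EuclideanSpace ℝ (Fin (n - 1)) :=
  (EuclideanSpace.equiv (Fin (n - 1)) ℝ).symm fun j => x (idxT n j)

/-- The Signorini energy `J(v) = ∫_{B_1^+} (aᵢⱼ ∂ᵢv ∂ⱼv + 2 f v)`. -/
def signoriniEnergy (n : ℕ) (a : Fin (n + 1) → Fin (n + 1) → Euc n → ℝ) (f : Euc n → ℝ)
    (v : Euc n → ℝ) : ℝ :=
  ∫ x in BplusAt n 1 0, ((∑ i, ∑ j, a i j x * pd n v i x * pd n v j x) + 2 * f x * v x)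

/-- `w` is a solution of the thin obstacle (Signorini) problem on `B_1^+` with metric `a`
and inhomogeneity `f`: it is `C¹` on `closure (B_1^+)`, nonnegative on `B_1'`, and a local
minimizer of the Signorini energy among admissible competitors. -/
structure IsSignoriniSolution (n : ℕ) (a : Fin (n + 1) → Fin (n + 1) → Euc n → ℝ)
    (f : Euc n → ℝ) (w : Euc n → ℝ) : Prop where
  contDiffOn : ContDiffOn ℝ 1 w (closure (BplusAt n 1 0))
  nonneg : ∀ x ∈ BprimeAt n 1 0, 0 ≤ w x
  isMinimizer : ∀ v : Euc n → ℝ, ContDiffOn ℝ 1 v (closure (BplusAt n 1 0)) →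
    (∀ x ∈ BprimeAt n 1 0, 0 ≤ v x) →
    tsupport (fun x => v x - w x) ⊆ Metric.ball (0 : Euc n) 1 →
    signoriniEnergy n a f w ≤ signoriniEnergy n a f v

/-- The contact set `Λ_w`. -/
def contactSet (n : ℕ) (w : Euc n → ℝ) : Set (Euc n) :=
  {x ∈ BprimeAt n 1 0 | w x = 0}

/-- The free boundary `Γ_w`, i.e. the topological boundary of `Λ_w` relative to `B_1'`. -/
def freeBoundary (n : ℕ) (w : Euc n → ℝ) : Set (Euc n) :=
  {x ∈ BprimeAt n 1 0 |
    x ∈ closure (contactSet n w) ∧ x ∈ closure (BprimeAt n 1 0 \ contactSet n w)}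

/-- The order of vanishing of `w` at `x₀` equals `κ`. -/
def HasVanishingOrder (n : ℕ) (w : Euc n → ℝ) (x₀ : Euc n) (κ : ℝ) : Prop :=
  Tendsto (fun r : ℝ =>
      Real.log (r ^ (-(((n : ℝ) + 1) / 2)) * Real.sqrt (∫ x in BplusAt n r x₀, (w x) ^ 2))
        / Real.log r)
    (nhdsWithin 0 (Set.Ioi 0)) (nhds κ)

/-- The regular free boundary `Γ_{3/2}(w)`. -/
def regularFreeBoundary (n : ℕ) (w : Euc n → ℝ) : Set (Euc n) :=
  {x ∈ freeBoundary n w | HasVanishingOrder n w x (3 / 2)}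

/-- `g : ℝ^{n-1} → ℝ` is of class `C^{m,β}`: `m` times continuously differentiable and,
if `β > 0`, with `β`-Hölder continuous `m`-th derivatives. -/
def CHolderFun (n m : ℕ) (β : ℝ) (g : EuclideanSpace ℝ (Fin (n - 1)) → ℝ) : Prop :=
  ContDiff ℝ m g ∧
    (0 < β → ∃ C : ℝ≥0, HolderWith C β.toNNReal (iteratedFDeriv ℝ m g))

/-- The graph `{(x'', g(x''), 0)}` of `g` inside `ℝ^{n+1}`. -/
def graphSet (n : ℕ) (g : EuclideanSpace ℝ (Fin (n - 1)) → ℝ) : Set (Euc n) :=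
  {x : Euc n | ∃ x'' : EuclideanSpace ℝ (Fin (n - 1)), x = put n x'' (g x'') 0}

/-- The regular free boundary of `w` is locally a `C^{m,β}` graph. -/
def IsLocallyCGraph (n : ℕ) (w : Euc n → ℝ) (m : ℕ) (β : ℝ) : Prop :=
  ∀ x₀ ∈ regularFreeBoundary n w, ∃ r > (0 : ℝ), ∃ Q : Euc n ≃ₗᵢ[ℝ] Euc n,
    LinearMap.det Q.toLinearEquiv.toLinearMap = 1 ∧
    Q (EuclideanSpace.single (idxLast n) 1) = EuclideanSpace.single (idxLast n) 1 ∧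
    ∃ g : EuclideanSpace ℝ (Fin (n - 1)) → ℝ, CHolderFun n m β g ∧
      (Q '' ((fun x => x - x₀) '' freeBoundary n w)) ∩ Metric.ball 0 r
        = graphSet n g ∩ Metric.ball 0 r

/-- The regular free boundary of `w` is locally a real analytic graph. -/
def IsLocallyAnalyticGraph (n : ℕ) (w : Euc n → ℝ) : Prop :=
  ∀ x₀ ∈ regularFreeBoundary n w, ∃ r > (0 : ℝ), ∃ Q : Euc n ≃ₗᵢ[ℝ] Euc n,
    LinearMap.det Q.toLinearEquiv.toLinearMap = 1 ∧
    Q (EuclideanSpace.single (idxLast n) 1) = EuclideanSpace.single (idxLast n) 1 ∧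
    ∃ g : EuclideanSpace ℝ (Fin (n - 1)) → ℝ, (∀ z, AnalyticAt ℝ g z) ∧
      (Q '' ((fun x => x - x₀) '' freeBoundary n w)) ∩ Metric.ball 0 r
        = graphSet n g ∩ Metric.ball 0 r

/-- The coefficient field is symmetric. -/
def SymmCoeff (n : ℕ) (a : Fin (n + 1) → Fin (n + 1) → Euc n → ℝ) : Prop :=
  ∀ i j x, a i j x = a j i x

/-- The coefficient field is uniformly elliptic on `closure (B_1^+)`. -/
def UnifElliptic (n : ℕ) (a : Fin (n + 1) → Fin (n + 1) → Euc n → ℝ) : Prop :=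
  ∃ lam Lam : ℝ, 0 < lam ∧ lam ≤ Lam ∧
    ∀ x ∈ closure (BplusAt n 1 0), ∀ ξ : Euc n,
      lam * ‖ξ‖ ^ 2 ≤ (∑ i, ∑ j, a i j x * ξ i * ξ j) ∧
      (∑ i, ∑ j, a i j x * ξ i * ξ j) ≤ Lam * ‖ξ‖ ^ 2

/-- `G` is the weak gradient of `u` on `B_1^+`. -/
def HasWeakGradient (n : ℕ) (u : Euc n → ℝ) (G : Euc n → Euc n) : Prop :=
  ∀ φ : Euc n → ℝ, ContDiff ℝ (⊤ : ℕ∞) φ → tsupport φ ⊆ BplusAt n 1 0 →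
    ∀ k : Fin (n + 1),
      ∫ x in BplusAt n 1 0, u x * pd n φ k x
        = - ∫ x in BplusAt n 1 0, G x k * φ x

/-- `u ∈ W^{1,p}(B_1^+)` for `p ∈ (n+1, ∞]` : for `p < ∞`, `u` is continuous up to the
boundary with a weak gradient in `L^p`; for `p = ∞`, `u` is Lipschitz on `B_1^+`. -/
def MemW1p (n : ℕ) (p : ℝ≥0∞) (u : Euc n → ℝ) : Prop :=
  if p = ∞ then ∃ K : ℝ≥0, LipschitzOnWith K u (BplusAt n 1 0)
  else ContinuousOn u (closure (BplusAt n 1 0)) ∧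
    ∃ G : Euc n → Euc n, HasWeakGradient n u G ∧
      MemLp G p (volume.restrict (BplusAt n 1 0))

/-- `u` is of class `C^{k,γ}` on `closure (B_1^+)`. -/
def CHolderOnClosure (n k : ℕ) (γ : ℝ) (u : Euc n → ℝ) : Prop :=
  ContDiffOn ℝ k u (closure (BplusAt n 1 0)) ∧
    ∃ C : ℝ≥0, HolderOnWith C γ.toNNReal
      (iteratedFDerivWithin ℝ k u (closure (BplusAt n 1 0))) (closure (BplusAt n 1 0))


/-- The model Legendre function `v₀(y) = -(1/3)(y_n³ - 3 y_n y_{n+1}²)`. -/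
def vZero (n : ℕ) (y : Euc n) : ℝ :=
  -(1 / 3) * ((y (idxN n)) ^ 3 - 3 * (y (idxN n)) * (y (idxLast n)) ^ 2)

/-- The Hessian matrix `D²v(y)`. -/
def hessOf (n : ℕ) (v : Euc n → ℝ) (y : Euc n) : Matrix (Fin (n + 1)) (Fin (n + 1)) ℝ :=
  Matrix.of fun i j => pd2 n v i j y

/-- The fully nonlinear function
`F(M) = -m_{nn} - m_{n+1,n+1} + Σᵢ det [[m_{ii}, m_{in}, m_{i,n+1}], …]`. -/
def Fmat (n : ℕ) (M : Matrix (Fin (n + 1)) (Fin (n + 1)) ℝ) : ℝ :=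
  -M (idxN n) (idxN n) - M (idxLast n) (idxLast n)
    + ∑ i : Fin (n - 1),
      Matrix.det
        !![M (idxT n i) (idxT n i), M (idxT n i) (idxN n), M (idxT n i) (idxLast n);
           M (idxN n) (idxT n i), M (idxN n) (idxN n), M (idxN n) (idxLast n);
           M (idxLast n) (idxT n i), M (idxLast n) (idxN n), M (idxLast n) (idxLast n)]

/-! ### Auxiliary lemmas for Statement 14 -/

lemma hasFDeriv_coord (n : ℕ) (i : Fin (n+1)) (y : Euc n) :
    HasFDerivAt (fun y : Euc n => y i) (EuclideanSpace.proj i : Euc n →L[ℝ] ℝ) y :=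
  (EuclideanSpace.proj (𝕜 := ℝ) i).hasFDerivAt.congr_of_eventuallyEq
    (Filter.Eventually.of_forall fun _ => rfl)

lemma idxN_ne_idxLast (n : ℕ) (hn : 2 ≤ n) : idxN n ≠ idxLast n := by
  simp [idxN, idxLast, Fin.ext_iff]; omega

lemma idxT_ne_idxN (n : ℕ) (hn : 2 ≤ n) (i : Fin (n-1)) : idxT n i ≠ idxN n := by
  have := i.2; simp [idxN, idxT, Fin.ext_iff]; omega

lemma idxT_ne_idxLast (n : ℕ) (hn : 2 ≤ n) (i : Fin (n-1)) : idxT n i ≠ idxLast n := by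
  have := i.2; simp [idxLast, idxT, Fin.ext_iff]; omega

lemma pd_vZero (n : ℕ) (hn : 2 ≤ n) (k : Fin (n+1)) (y : Euc n) :
    pd n (vZero n) k y =
      (if k = idxN n then (y (idxLast n))^2 - (y (idxN n))^2 else 0)
      + (if k = idxLast n then 2*(y (idxN n))*(y (idxLast n)) else 0) := by
  have hne := idxN_ne_idxLast n hn
  have h1 := hasFDeriv_coord n (idxN n) y
  have h2 := hasFDeriv_coord n (idxLast n) y
  have hv := ((((h1.mul h1).mul h1).sub ((h1.const_mul 3).mul (h2.mul h2))).const_mul (-(1/3)))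
  have hv' : HasFDerivAt (vZero n) _ y :=
    hv.congr_of_eventuallyEq (Filter.Eventually.of_forall fun x => by
      simp only [vZero, Pi.mul_apply, Pi.sub_apply]; ring)
  rw [pd, hv'.fderiv]
  simp only [ContinuousLinearMap.add_apply, ContinuousLinearMap.smul_apply,
    ContinuousLinearMap.sub_apply, ContinuousLinearMap.coe_smul', Pi.smul_apply,
    smul_eq_mul, PiLp.proj_apply, EuclideanSpace.single_apply]
  rcases eq_or_ne k (idxN n) with hk1 | hk1 <;> rcases eq_or_ne k (idxLast n) with hk2 | hk2 <;>
    simp [hk1, hk2, hne, hne.symm, eq_comm (a := idxN n) (b := k),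
      eq_comm (a := idxLast n) (b := k)] <;> ring

lemma pd_quad (n : ℕ) (hn : 2 ≤ n) (A B : ℝ) (j : Fin (n+1)) (y : Euc n) :
    pd n (fun y : Euc n => A * ((y (idxLast n))^2 - (y (idxN n))^2)
        + B * (2*(y (idxN n))*(y (idxLast n)))) j y
    = (if j = idxN n then -2*A*(y (idxN n)) + 2*B*(y (idxLast n)) else 0)
      + (if j = idxLast n then 2*A*(y (idxLast n)) + 2*B*(y (idxN n)) else 0) := by
  have hne := idxN_ne_idxLast n hn
  have h1 := hasFDeriv_coord n (idxN n) y
  have h2 := hasFDeriv_coord n (idxLast n) y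
  have hv := (((h2.mul h2).sub (h1.mul h1)).const_mul A).add
    (((h1.const_mul 2).mul h2).const_mul B)
  have hv' : HasFDerivAt (fun y : Euc n => A * ((y (idxLast n))^2 - (y (idxN n))^2)
      + B * (2*(y (idxN n))*(y (idxLast n)))) _ y :=
    hv.congr_of_eventuallyEq (Filter.Eventually.of_forall fun x => by
      simp only [Pi.add_apply, Pi.mul_apply, Pi.sub_apply]; ring)
  rw [pd, hv'.fderiv]
  simp only [ContinuousLinearMap.add_apply, ContinuousLinearMap.smul_apply,
    ContinuousLinearMap.sub_apply, ContinuousLinearMap.coe_smul', Pi.smul_apply,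
    smul_eq_mul, PiLp.proj_apply, EuclideanSpace.single_apply]
  rcases eq_or_ne j (idxN n) with hk1 | hk1 <;> rcases eq_or_ne j (idxLast n) with hk2 | hk2 <;>
    simp [hk1, hk2, hne, hne.symm, eq_comm (a := idxN n) (b := j),
      eq_comm (a := idxLast n) (b := j)] <;> ring

lemma hess_vZero (n : ℕ) (hn : 2 ≤ n) (y : Euc n) (i j : Fin (n+1)) :
    hessOf n (vZero n) y i j =
      (if i = idxN n then (if j = idxN n then -2*(y (idxN n))
          else if j = idxLast n then 2*(y (idxLast n)) else 0)
        else if i = idxLast n then (if j = idxN n then 2*(y (idxLast n))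
          else if j = idxLast n then 2*(y (idxN n)) else 0)
        else 0) := by
  have hne := idxN_ne_idxLast n hn
  have hfun : pd n (vZero n) i = fun y : Euc n =>
      (if i = idxN n then (1:ℝ) else 0) * ((y (idxLast n))^2 - (y (idxN n))^2)
      + (if i = idxLast n then (1:ℝ) else 0) * (2*(y (idxN n))*(y (idxLast n))) := by
    funext z
    rw [pd_vZero n hn i z]
    split_ifs <;> ring
  show pd2 n (vZero n) i j y = _
  rw [pd2, hfun, pd_quad n hn _ _ j y]
  rcases eq_or_ne i (idxN n) with hi1 | hi1 <;> rcases eq_or_ne i (idxLast n) with hi2 | hi2 <;>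
    rcases eq_or_ne j (idxN n) with hj1 | hj1 <;> rcases eq_or_ne j (idxLast n) with hj2 | hj2 <;>
      simp [hi1, hi2, hj1, hj2, hne, hne.symm] <;> ring

lemma det_term_hasDerivAt (s τ a b c d e f g h k : ℝ) :
    HasDerivAt (fun t : ℝ => Matrix.det !![t*a, t*b, t*c;
        t*d, -2*s + t*e, 2*τ + t*f;
        t*g, 2*τ + t*h, 2*s + t*k]) (-(4*(s^2+τ^2))*a) 0 := by
  have hpoly : (fun t : ℝ => Matrix.det !![t*a, t*b, t*c;
        t*d, -2*s + t*e, 2*τ + t*f; t*g, 2*τ + t*h, 2*s + t*k])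
      = fun t => t * (a*((-2*s + t*e)*(2*s + t*k) - (2*τ + t*f)*(2*τ + t*h))
          - b*(t*d*(2*s + t*k) - (2*τ + t*f)*(t*g))
          + c*(t*d*(2*τ + t*h) - (-2*s + t*e)*(t*g))) := by
    funext t; simp [Matrix.det_fin_three]; ring
  rw [hpoly]
  have hq : DifferentiableAt ℝ (fun t : ℝ =>
      a*((-2*s + t*e)*(2*s + t*k) - (2*τ + t*f)*(2*τ + t*h))
      - b*(t*d*(2*s + t*k) - (2*τ + t*f)*(t*g))
      + c*(t*d*(2*τ + t*h) - (-2*s + t*e)*(t*g))) 0 := by fun_prop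
  have h := (hasDerivAt_id (0:ℝ)).fun_mul hq.hasDerivAt
  simp only [id_eq, one_mul, zero_mul, add_zero, mul_zero, zero_add, sub_zero] at h
  refine h.congr_deriv ?_
  ring

/-- The model Legendre function `v₀` solves `F(D²v₀) = 0`, and the
linearization of `M ↦ F(M)` at `D²v₀(y)` in the direction of a symmetric matrix `H` is
`-(4(y_n² + y_{n+1}²) Σᵢ H_{ii} + H_{nn} + H_{n+1,n+1})`, i.e. (minus) the
Baouendi–Grushin operator. -/
theorem statement14 (n : ℕ) (hn : 2 ≤ n) :
    (∀ y : Euc n, Fmat n (hessOf n (vZero n) y) = 0) ∧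
    ∀ (y : Euc n) (H : Matrix (Fin (n + 1)) (Fin (n + 1)) ℝ), H.IsSymm →
      HasDerivAt (fun t : ℝ => Fmat n (hessOf n (vZero n) y + t • H))
        (-(4 * ((y (idxN n)) ^ 2 + (y (idxLast n)) ^ 2)
              * (∑ i : Fin (n - 1), H (idxT n i) (idxT n i))
            + H (idxN n) (idxN n) + H (idxLast n) (idxLast n))) 0 := by
  have hne := idxN_ne_idxLast n hn
  have key : ∀ y : Euc n,
      (hessOf n (vZero n) y (idxN n) (idxN n) = -2 * y (idxN n)) ∧
      (hessOf n (vZero n) y (idxN n) (idxLast n) = 2 * y (idxLast n)) ∧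
      (hessOf n (vZero n) y (idxLast n) (idxN n) = 2 * y (idxLast n)) ∧
      (hessOf n (vZero n) y (idxLast n) (idxLast n) = 2 * y (idxN n)) ∧
      (∀ i : Fin (n-1), ∀ j, hessOf n (vZero n) y (idxT n i) j = 0) ∧
      (∀ i : Fin (n-1), hessOf n (vZero n) y (idxN n) (idxT n i) = 0) ∧
      (∀ i : Fin (n-1), hessOf n (vZero n) y (idxLast n) (idxT n i) = 0) := by
    intro y
    refine ⟨?_, ?_, ?_, ?_, fun i j => ?_, fun i => ?_, fun i => ?_⟩ <;>
      rw [hess_vZero n hn] <;>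
      first
        | (simp [hne, hne.symm]; done)
        | simp [hne, hne.symm, idxT_ne_idxN n hn i, idxT_ne_idxLast n hn i,
            (idxT_ne_idxN n hn i).symm, (idxT_ne_idxLast n hn i).symm]
  constructor
  · intro y
    obtain ⟨e11, e12, e21, e22, eT, eNT, eLT⟩ := key y
    simp only [Fmat, e11, e12, e21, e22, eT, eNT, eLT, Matrix.det_fin_three]
    simp [Matrix.cons_val_zero, Matrix.cons_val_one]
  · intro y H _
    obtain ⟨e11, e12, e21, e22, eT, eNT, eLT⟩ := key y
    set s := y (idxN n) with hs
    set τ := y (idxLast n) with hτ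
    have hfun : (fun t : ℝ => Fmat n (hessOf n (vZero n) y + t • H)) = fun t =>
        (-(-2*s + t * H (idxN n) (idxN n)) - (2*s + t * H (idxLast n) (idxLast n)))
        + ∑ i : Fin (n-1), Matrix.det
            !![t * H (idxT n i) (idxT n i), t * H (idxT n i) (idxN n), t * H (idxT n i) (idxLast n);
               t * H (idxN n) (idxT n i), -2*s + t * H (idxN n) (idxN n), 2*τ + t * H (idxN n) (idxLast n);
               t * H (idxLast n) (idxT n i), 2*τ + t * H (idxLast n) (idxN n), 2*s + t * H (idxLast n) (idxLast n)] := by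
      funext t
      simp only [Fmat, Matrix.add_apply, Matrix.smul_apply, smul_eq_mul,
        e11, e12, e21, e22, eT, eNT, eLT, zero_add]
    rw [hfun]
    have hlin : HasDerivAt (fun t : ℝ =>
        (-(-2*s + t * H (idxN n) (idxN n)) - (2*s + t * H (idxLast n) (idxLast n))))
        (-(H (idxN n) (idxN n)) - H (idxLast n) (idxLast n)) 0 := by
      simpa using ((((hasDerivAt_id (0:ℝ)).mul_const (H (idxN n) (idxN n))).const_add
        (-2*s)).fun_neg.fun_sub (((hasDerivAt_id (0:ℝ)).mul_const
        (H (idxLast n) (idxLast n))).const_add (2*s)))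
    have hsum : HasDerivAt (fun t : ℝ => ∑ i : Fin (n-1), Matrix.det
            !![t * H (idxT n i) (idxT n i), t * H (idxT n i) (idxN n), t * H (idxT n i) (idxLast n);
               t * H (idxN n) (idxT n i), -2*s + t * H (idxN n) (idxN n), 2*τ + t * H (idxN n) (idxLast n);
               t * H (idxLast n) (idxT n i), 2*τ + t * H (idxLast n) (idxN n), 2*s + t * H (idxLast n) (idxLast n)])
        (∑ i : Fin (n-1), -(4*(s^2+τ^2)) * H (idxT n i) (idxT n i)) 0 :=
      HasDerivAt.fun_sum fun i _ => det_term_hasDerivAt s τ _ _ _ _ _ _ _ _ _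
    have htot := hlin.fun_add hsum
    refine htot.congr_deriv ?_
    rw [← Finset.mul_sum]
    ring


end
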